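/- Let m ≥ 1, R > 1, and let (A_k)_{k≥0} be linear maps of ℝ^{m+1} with ‖A_k‖ < R. Let (e_k)_{k≥0} be unit vectors with A_k e_k = λ_k e_{k+1} where λ_k = ‖A_k e_k‖ > 0; let S_k be the orthogonal complement of e_k, Q_k the orthogonal projection onto S_k, B_k v = Q_{k+1}(A_k v) and D_k v = (I − Q_{k+1})(A_k v) for v ∈ S_k. Suppose: (a) there exists L₁ > 0 such that for every sequence (w_k^⊥ ∈ S_k)_{k≥0} with ‖w_k^⊥‖ ≤ 1 there exists (v_k^⊥ ∈ S_k)_{k≥0} with v_{k+1}^⊥ = B_k v_k^⊥ + w_{k+1}^⊥ and ‖v_k^⊥‖ ≤ L₁ for all k ≥ 0; (b) there exists L₂ > 0 such that for every real sequence (w_k^1)_{k≥0} with |w_k^1| ≤ 1 there exists a real sequence (v_k^1)_{k≥0} with v_{k+1}^1 = λ_k v_k^1 + w_{k+1}^1 and |v_k^1| ≤ L₂ for all k ≥ 0. Then for every sequence (w_k ∈ ℝ^{m+1})_{k≥0} with ‖w_k‖ ≤ 1 there exists (v_k ∈ ℝ^{m+1})_{k≥0} with v_{k+1} = A_k v_k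 + w_{k+1} and ‖v_k‖ ≤ L₂(L₁R + 1) + L₁ for all k ≥ 0. -/

import Mathlib

/-!
Write a solution as `v k = vp k + s k • e k` with `vp k ∈ S k`. Since `A k` maps `e k` to
`lam k • e (k + 1)`, the recurrence `v (k + 1) = A k (v k) + w (k + 1)` is triangular in this
splitting: its `S (k + 1)`-component is the projected recurrence for `vp` driven by the projection
of `w`, and its `e (k + 1)`-component is the scalar recurrence for `s` driven by
`⟪e (k + 1), A k (vp k) + w (k + 1)⟫`, a forcing of size at most `L₁ R + 1`. Solving the first
with (a) and then the second with (b), rescaled by `L₁ R + 1`, gives the bound.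
-/

noncomputable section

abbrev Euc (m : ℕ) := EuclideanSpace ℝ (Fin m)

/-- The orthogonal complement `S k` of the unit vector `e k`. -/
def Sperp (m : ℕ) (e : ℕ → Euc m) (k : ℕ) : Submodule ℝ (Euc m) :=
  (ℝ ∙ e k)ᗮ

/-- The orthogonal projection of `Euc m` onto `S k`, as a map `Euc m → Euc m`. -/
def projS (m : ℕ) (e : ℕ → Euc m) (k : ℕ) : Euc m →L[ℝ] Euc m :=
  (Sperp m e k).subtypeL.comp (Submodule.orthogonalProjection (Sperp m e k))

open RealInnerProductSpace

section Projection

variable {m : ℕ} (e : ℕ → Euc m) (k : ℕ)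

theorem projS_eq_starProjection : projS m e k = (Sperp m e k).starProjection := rfl

theorem projS_apply_mem (x : Euc m) : projS m e k x ∈ Sperp m e k := by
  rw [projS_eq_starProjection]
  exact Submodule.starProjection_apply_mem _ x

theorem norm_projS_apply_le (x : Euc m) : ‖projS m e k x‖ ≤ ‖x‖ := by
  rw [projS_eq_starProjection]
  exact Submodule.norm_starProjection_apply_le _ x

end Projection

theorem projS_add_inner_smul {m : ℕ} {e : ℕ → Euc m} {k : ℕ} (he : ‖e k‖ = 1) (x : Euc m) :
    projS m e k x + ⟪e k, x⟫ • e k = x := by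
  rw [projS_eq_starProjection, Sperp, ← Submodule.starProjection_unit_singleton ℝ he, add_comm]
  exact Submodule.starProjection_add_starProjection_orthogonal x

theorem apply_add_smul_add_eq_projS_add_smul {m : ℕ} {e : ℕ → Euc m} {k : ℕ}
    (he : ‖e (k + 1)‖ = 1) {T : Euc m →L[ℝ] Euc m} {μ : ℝ} (hT : T (e k) = μ • e (k + 1))
    (x y : Euc m) (s : ℝ) :
    T (x + s • e k) + y =
      (projS m e (k + 1) (T x) + projS m e (k + 1) y) +
        (μ * s + ⟪e (k + 1), T x + y⟫) • e (k + 1) := by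
  have hsplit := projS_add_inner_smul he (T x + y)
  rw [map_add] at hsplit
  rw [map_add, map_smul, hT, add_smul, mul_smul]
  linear_combination (norm := module) -hsplit

theorem abs_inner_apply_add_le {E : Type*} [NormedAddCommGroup E] [InnerProductSpace ℝ E]
    {u : E} (hu : ‖u‖ = 1) {T : E →L[ℝ] E} {R L : ℝ} (hT : ‖T‖ ≤ R) {x y : E}
    (hx : ‖x‖ ≤ L) (hy : ‖y‖ ≤ 1) : |⟪u, T x + y⟫| ≤ L * R + 1 := by
  have hR : 0 ≤ R := (norm_nonneg T).trans hT
  calc |⟪u, T x + y⟫| ≤ ‖u‖ * ‖T x + y‖ := abs_real_inner_le_norm _ _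
    _ ≤ ‖T x‖ + ‖y‖ := by rw [hu, one_mul]; exact norm_add_le _ _
    _ ≤ R * ‖x‖ + 1 := add_le_add (T.le_of_opNorm_le hT x) hy
    _ ≤ L * R + 1 := by nlinarith

theorem exists_bounded_solution_of_abs_le {lam : ℕ → ℝ} {L C : ℝ} (hC : 0 < C)
    (hb : ∀ w1 : ℕ → ℝ, (∀ k, |w1 k| ≤ 1) →
      ∃ v1 : ℕ → ℝ, (∀ k, v1 (k + 1) = lam k * v1 k + w1 (k + 1)) ∧ ∀ k, |v1 k| ≤ L)
    (g : ℕ → ℝ) (hg : ∀ k, |g k| ≤ C) :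
    ∃ s : ℕ → ℝ, (∀ k, s (k + 1) = lam k * s k + g k) ∧ ∀ k, |s k| ≤ C * L := by
  -- `k - 1` shifts the forcing to the indexing of `hb`; its value at `0` plays no role.
  obtain ⟨v1, hrec, hbd⟩ := hb (fun k => g (k - 1) / C) fun k => by
    rw [abs_div, abs_of_pos hC, div_le_one hC]
    exact hg _
  refine ⟨fun k => C * v1 k, fun k => ?_, fun k => ?_⟩
  · simp only [hrec, Nat.add_sub_cancel]
    field_simp
  · rw [abs_mul, abs_of_pos hC]
    exact mul_le_mul_of_nonneg_left (hbd k) hC.le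

theorem bounded_solutions_from_triangular_structure_general
    (m : ℕ) (R : ℝ)
    (A : ℕ → Euc (m + 1) →L[ℝ] Euc (m + 1)) (hAbound : ∀ k : ℕ, ‖A k‖ < R)
    (e : ℕ → Euc (m + 1)) (he : ∀ k : ℕ, ‖e k‖ = 1)
    (lam : ℕ → ℝ)
    (herec : ∀ k : ℕ, A k (e k) = lam k • e (k + 1))
    (L₁ : ℝ)
    (ha : ∀ wp : ℕ → Euc (m + 1),
      (∀ k : ℕ, wp k ∈ Sperp (m + 1) e k) → (∀ k : ℕ, ‖wp k‖ ≤ 1) →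
      ∃ vp : ℕ → Euc (m + 1),
        (∀ k : ℕ, vp k ∈ Sperp (m + 1) e k) ∧
        (∀ k : ℕ, vp (k + 1) = projS (m + 1) e (k + 1) (A k (vp k)) + wp (k + 1)) ∧
        (∀ k : ℕ, ‖vp k‖ ≤ L₁))
    (L₂ : ℝ)
    (hb : ∀ w1 : ℕ → ℝ, (∀ k : ℕ, |w1 k| ≤ 1) →
      ∃ v1 : ℕ → ℝ,
        (∀ k : ℕ, v1 (k + 1) = lam k * v1 k + w1 (k + 1)) ∧
        (∀ k : ℕ, |v1 k| ≤ L₂)) :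
    ∀ w : ℕ → Euc (m + 1), (∀ k : ℕ, ‖w k‖ ≤ 1) →
      ∃ v : ℕ → Euc (m + 1),
        (∀ k : ℕ, v (k + 1) = A k (v k) + w (k + 1)) ∧
        (∀ k : ℕ, ‖v k‖ ≤ L₂ * (L₁ * R + 1) + L₁) := by
  intro w hw
  obtain ⟨vp, -, hvp_rec, hvp_bd⟩ := ha (fun k => projS (m + 1) e k (w k))
    (fun k => projS_apply_mem e k (w k)) (fun k => (norm_projS_apply_le e k (w k)).trans (hw k))
  have hR : 0 ≤ R := (norm_nonneg _).trans (hAbound 0).le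
  have hL₁ : 0 ≤ L₁ := (norm_nonneg _).trans (hvp_bd 0)
  obtain ⟨s, hs_rec, hs_bd⟩ := exists_bounded_solution_of_abs_le (C := L₁ * R + 1)
    (by positivity) hb (fun k => ⟪e (k + 1), A k (vp k) + w (k + 1)⟫)
    (fun k => abs_inner_apply_add_le (he _) (hAbound k).le (hvp_bd k) (hw _))
  refine ⟨fun k => vp k + s k • e k, fun k => ?_, fun k => ?_⟩
  · show vp (k + 1) + s (k + 1) • e (k + 1) = _
    rw [apply_add_smul_add_eq_projS_add_smul (he _) (herec k), hvp_rec, hs_rec]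
  · calc ‖vp k + s k • e k‖ ≤ ‖vp k‖ + |s k| := by
          simpa [norm_smul, he] using norm_add_le (vp k) (s k • e k)
      _ ≤ L₂ * (L₁ * R + 1) + L₁ := by linarith [hvp_bd k, hs_bd k]

/-- If the projected system `B k` and the one-dimensional system `λ k` both
have the bounded solution property on ℤ⁺, then so does the full system,
with the explicit bound `L₂(L₁R + 1) + L₁`. -/
theorem bounded_solutions_from_triangular_structure
    (m : ℕ) (hm : 1 ≤ m) (R : ℝ) (hR : 1 < R)
    (A : ℕ → Euc (m + 1) →L[ℝ] Euc (m + 1)) (hAbound : ∀ k : ℕ, ‖A k‖ < R)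
    (e : ℕ → Euc (m + 1)) (he : ∀ k : ℕ, ‖e k‖ = 1)
    (lam : ℕ → ℝ) (hlamdef : ∀ k : ℕ, lam k = ‖A k (e k)‖)
    (hlampos : ∀ k : ℕ, 0 < lam k)
    (herec : ∀ k : ℕ, A k (e k) = lam k • e (k + 1))
    (L₁ : ℝ) (hL₁ : 0 < L₁)
    (ha : ∀ wp : ℕ → Euc (m + 1),
      (∀ k : ℕ, wp k ∈ Sperp (m + 1) e k) → (∀ k : ℕ, ‖wp k‖ ≤ 1) →
      ∃ vp : ℕ → Euc (m + 1),
        (∀ k : ℕ, vp k ∈ Sperp (m + 1) e k) ∧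
        (∀ k : ℕ, vp (k + 1) = projS (m + 1) e (k + 1) (A k (vp k)) + wp (k + 1)) ∧
        (∀ k : ℕ, ‖vp k‖ ≤ L₁))
    (L₂ : ℝ) (hL₂ : 0 < L₂)
    (hb : ∀ w1 : ℕ → ℝ, (∀ k : ℕ, |w1 k| ≤ 1) →
      ∃ v1 : ℕ → ℝ,
        (∀ k : ℕ, v1 (k + 1) = lam k * v1 k + w1 (k + 1)) ∧
        (∀ k : ℕ, |v1 k| ≤ L₂)) :
    ∀ w : ℕ → Euc (m + 1), (∀ k : ℕ, ‖w k‖ ≤ 1) →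
      ∃ v : ℕ → Euc (m + 1),
        (∀ k : ℕ, v (k + 1) = A k (v k) + w (k + 1)) ∧
        (∀ k : ℕ, ‖v k‖ ≤ L₂ * (L₁ * R + 1) + L₁) :=
  bounded_solutions_from_triangular_structure_general m R A hAbound e he lam herec L₁ ha L₂ hb
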